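/- Let l, k, n be integers with 0 ≤ l ≤ k − 1 and k < n. Then C(n, l+1) / C(k, l+1) = C(n, k) · (n − k) · ∫_0^1 x^{n−k−1} (1−x)^{k−l−1} dx. -/

import Mathlib

lemma beta_nat (a b : ℕ) :
    ∫ x in (0:ℝ)..1, x ^ a * (1 - x) ^ b =
      (a.factorial * b.factorial : ℝ) / (a + b + 1).factorial := by
  induction b generalizing a with
  | zero =>
    have : (a.factorial : ℝ) ≠ 0 := by exact_mod_cast a.factorial_ne_zero
    have h1 : ((a:ℝ) + 1) ≠ 0 := by positivity
    simp only [pow_zero, mul_one, integral_pow, one_pow, Nat.factorial_one,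
      Nat.cast_one, mul_one, add_zero]
    rw [Nat.factorial_succ]
    push_cast
    field_simp
    simp
  | succ b IH =>
    have hu : ∀ x ∈ Set.uIcc (0:ℝ) 1,
        HasDerivAt (fun x : ℝ => (1 - x) ^ (b + 1))
          (-((b:ℝ) + 1) * (1 - x) ^ b) x := by
      intro x _
      have h := ((hasDerivAt_id x).const_sub 1).fun_pow (b + 1)
      simp only [id_eq] at h
      refine h.congr_deriv ?_
      push_cast
      ring
    have hv : ∀ x ∈ Set.uIcc (0:ℝ) 1,
        HasDerivAt (fun x : ℝ => x ^ (a + 1) / ((a:ℝ) + 1)) (x ^ a) x := by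
      intro x _
      have h := (hasDerivAt_pow (a + 1) x).div_const ((a:ℝ) + 1)
      refine h.congr_deriv ?_
      have : ((a:ℝ) + 1) ≠ 0 := by positivity
      field_simp
      simp
    have hint := intervalIntegral.integral_mul_deriv_eq_deriv_mul hu hv
      (by apply Continuous.intervalIntegrable; continuity)
      (by apply Continuous.intervalIntegrable; continuity)
    have heq : (∫ x in (0:ℝ)..1, x ^ a * (1 - x) ^ (b + 1)) =
        (∫ x in (0:ℝ)..1, (1 - x) ^ (b + 1) * x ^ a) := by
      congr 1; ext x; ring
    rw [heq, hint]
    have heq2 : (∫ x in (0:ℝ)..1, -((b:ℝ) + 1) * (1 - x) ^ b * (x ^ (a + 1) / ((a:ℝ) + 1))) =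
        (-((b:ℝ) + 1) / ((a:ℝ) + 1)) * ∫ x in (0:ℝ)..1, x ^ (a + 1) * (1 - x) ^ b := by
      rw [← intervalIntegral.integral_const_mul]
      congr 1; ext x; ring
    rw [heq2, IH (a + 1)]
    have h1 : ((a:ℝ) + 1) ≠ 0 := by positivity
    have h2 : ((a + 1 + b + 1).factorial : ℝ) ≠ 0 := by
      exact_mod_cast (a + 1 + b + 1).factorial_ne_zero
    have h3 : ((a + (b + 1) + 1).factorial : ℝ) ≠ 0 := by
      exact_mod_cast (a + (b + 1) + 1).factorial_ne_zero
    have e1 : ((a+1).factorial : ℝ) = ((a:ℝ) + 1) * a.factorial := by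
      rw [Nat.factorial_succ]; push_cast; ring
    have e2 : ((b+1).factorial : ℝ) = ((b:ℝ) + 1) * b.factorial := by
      rw [Nat.factorial_succ]; push_cast; ring
    have e3 : a + 1 + b + 1 = a + (b + 1) + 1 := by omega
    rw [e1, e2, e3]
    simp only [pow_succ, one_pow, zero_pow]
    field_simp
    ring

/-- The Beta-integral identity
C(n,l+1)/C(k,l+1) = C(n,k)·(n−k)·∫₀¹ x^{n−k−1}(1−x)^{k−l−1} dx. -/
theorem stmt7 (l k n : ℕ) (hlk : l + 1 ≤ k) (hkn : k < n) :
    (n.choose (l + 1) : ℝ) / (k.choose (l + 1)) =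
      (n.choose k : ℝ) * ((n : ℝ) - k) *
        ∫ x in (0:ℝ)..1, x ^ (n - (k + 1)) * (1 - x) ^ (k - (l + 1)) := by
  rw [beta_nat]
  have hsum : n - (k + 1) + (k - (l + 1)) + 1 = n - (l + 1) := by omega
  rw [hsum]
  have hln : l + 1 ≤ n := by omega
  have hkn' : k ≤ n := hkn.le
  rw [Nat.cast_choose ℝ hln, Nat.cast_choose ℝ hlk, Nat.cast_choose ℝ hkn']
  have hd : ((n:ℝ) - k) = ((n - k : ℕ) : ℝ) := by
    rw [Nat.cast_sub hkn']
  have hS : ((n - k).factorial : ℝ) = ((n:ℝ) - (k:ℝ)) * ((n - (k+1)).factorial : ℝ) := by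
    have : n - k = (n - (k + 1)) + 1 := by omega
    rw [this, Nat.factorial_succ, hd, this]
    push_cast
    ring_nf
  -- nonzero facts
  have f1 : ((l+1).factorial : ℝ) ≠ 0 := by exact_mod_cast (l+1).factorial_ne_zero
  have f2 : ((n - (l+1)).factorial : ℝ) ≠ 0 := by exact_mod_cast (n - (l+1)).factorial_ne_zero
  have f3 : ((k - (l+1)).factorial : ℝ) ≠ 0 := by exact_mod_cast (k - (l+1)).factorial_ne_zero
  have f4 : ((n - k).factorial : ℝ) ≠ 0 := by exact_mod_cast (n - k).factorial_ne_zero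
  have f5 : ((k).factorial : ℝ) ≠ 0 := by exact_mod_cast k.factorial_ne_zero
  have f6 : ((n - (k+1)).factorial : ℝ) ≠ 0 := by exact_mod_cast (n - (k+1)).factorial_ne_zero
  have f7 : ((k).choose (l+1) : ℝ) ≠ 0 := by
    exact_mod_cast (Nat.choose_pos hlk).ne'
  have hne : ((n:ℝ) - k) ≠ 0 := by
    rw [sub_ne_zero]
    exact_mod_cast hkn.ne'
  rw [hS]
  field_simp
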